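/- For α > 0, the functions u(r) = √α r / sinh(√α r) and f(r) = coth(√α r) − 1/(√α r) satisfy, for all r > 0, the first-order BPS equations u' + √α f u = 0 and √α r f' = (1−u²)/r, and hence the second-order equations u'' = α f² u + u(u²−1)/r² and f'' = −(2/r) f' + (2/r²) f u²; moreover lim_{r→0} u(r)=1, lim_{r→0} f(r)=0, lim_{r→∞} u(r)=0, lim_{r→∞} f(r)=1, and the energy equals I(u,f) = ∫₀^∞ [2 u'² + (1−u²)²/r² + α r² f'² + 2α f² u²] dr = 2√α. -/

import Mathlib

/-!
Bogomolny's trick: with `s = √α`, the energy density equals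
`2 (u' + s f u)² + (s r f' − (1 − u²)/r)² + d/dr [2 s f (1 − u²)]`,
so on a solution of the first-order BPS equations the energy is the boundary term
`2 s [f (1 − u²)]₀^∞ = 2 s`. The profiles are `u(r) = U(s r)`, `f(r) = L(s r)` with
`U x = x / sinh x` and `L` the Langevin function; these solve the BPS equations for `s = 1`,
`U' = −L U` and `L' = (1 − U²)/x²`. The second-order equations follow by differentiating the
first-order ones, and the limits at `0` come from `sinh x / x → 1` and `0 ≤ L x ≤ x`.
-/

open MeasureTheory Filter Set Topology

noncomputable section

/-- The integrand of the BPS (`β = 2`, `γ = 0`) energy functional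
`I(u,f) = ∫₀^∞ [2 u'² + (1−u²)²/r² + α r² f'² + 2α f² u²] dr`. -/
def bpsIntegrand (α : ℝ) (u u' f f' : ℝ → ℝ) (r : ℝ) : ℝ :=
  2 * u' r ^ 2 + (1 - u r ^ 2) ^ 2 / r ^ 2
    + α * r ^ 2 * f' r ^ 2 + 2 * α * f r ^ 2 * u r ^ 2

open Real

lemma mul_sinh_nonneg (x : ℝ) : 0 ≤ x * sinh x := by
  rcases le_total 0 x with hx | hx
  · exact mul_nonneg hx (sinh_nonneg_iff.mpr hx)
  · exact mul_nonneg_of_nonpos_of_nonpos hx (sinh_nonpos_iff.mpr hx)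

lemma sinh_le_mul_cosh {x : ℝ} (hx : 0 ≤ x) : sinh x ≤ x * cosh x := by
  have hmono : Monotone fun y => y * cosh y - sinh y :=
    monotone_of_hasDerivAt_nonneg
      (fun y => (((hasDerivAt_id' y).mul (hasDerivAt_cosh y)).sub (hasDerivAt_sinh y)).congr_deriv
        (by ring))
      mul_sinh_nonneg
  simpa using hmono hx

lemma mul_cosh_sub_sinh_le {x : ℝ} (hx : 0 ≤ x) : x * cosh x - sinh x ≤ x ^ 2 * sinh x := by
  have hmono : Monotone fun y => y ^ 2 * sinh y - (y * cosh y - sinh y) :=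
    monotone_of_hasDerivAt_nonneg
      (fun y => (((hasDerivAt_pow 2 y).mul (hasDerivAt_sinh y)).sub
        (((hasDerivAt_id' y).mul (hasDerivAt_cosh y)).sub (hasDerivAt_sinh y))).congr_deriv
          (by ring))
      (fun y => add_nonneg (mul_sinh_nonneg y) (mul_nonneg (sq_nonneg y) (cosh_pos y).le))
  simpa using hmono hx

def langevin (x : ℝ) : ℝ := cosh x / sinh x - 1 / x

lemma langevin_nonneg {x : ℝ} (hx : 0 < x) : 0 ≤ langevin x := by
  rw [langevin, sub_nonneg, div_le_div_iff₀ hx (sinh_pos_iff.mpr hx)]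
  linarith [sinh_le_mul_cosh hx.le]

lemma langevin_le_self {x : ℝ} (hx : 0 < x) : langevin x ≤ x := by
  have hsinh := sinh_pos_iff.mpr hx
  rw [langevin, div_sub_div _ _ hsinh.ne' hx.ne', div_le_iff₀ (by positivity)]
  linarith [mul_cosh_sub_sinh_le hx.le]

lemma tendsto_langevin_nhdsGT_zero : Tendsto langevin (𝓝[>] 0) (𝓝 0) :=
  tendsto_of_tendsto_of_tendsto_of_le_of_le' tendsto_const_nhds
    (tendsto_nhdsWithin_of_tendsto_nhds tendsto_id)
    (eventually_nhdsWithin_of_forall fun _ hx => langevin_nonneg hx)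
    (eventually_nhdsWithin_of_forall fun _ hx => langevin_le_self hx)

lemma tendsto_sinh_atTop : Tendsto sinh atTop atTop :=
  tendsto_atTop_mono' _ (eventually_ge_atTop 0 |>.mono fun _ hx => self_le_sinh_iff.mpr hx)
    tendsto_id

-- `coth x = 1 + exp (-x) / sinh x`
lemma tendsto_cosh_div_sinh_atTop : Tendsto (fun x => cosh x / sinh x) atTop (𝓝 1) := by
  have h := (tendsto_exp_neg_atTop_nhds_zero.div_atTop tendsto_sinh_atTop).const_add 1
  rw [add_zero] at h
  refine h.congr' ?_
  filter_upwards [eventually_gt_atTop 0] with x hx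
  rw [← cosh_sub_sinh, sub_div, div_self (sinh_pos_iff.mpr hx).ne']
  ring

lemma tendsto_langevin_atTop : Tendsto langevin atTop (𝓝 1) := by
  have h := tendsto_cosh_div_sinh_atTop.sub (tendsto_inv_atTop_zero (𝕜 := ℝ))
  rw [sub_zero] at h
  exact h.congr fun x => by rw [langevin, one_div]

lemma hasDerivAt_langevin {x : ℝ} (hx : x ≠ 0) :
    HasDerivAt langevin ((1 - (x / sinh x) ^ 2) / x ^ 2) x := by
  have hsinh : sinh x ≠ 0 := sinh_ne_zero.mpr hx
  refine (((hasDerivAt_cosh x).div (hasDerivAt_sinh x) hsinh).sub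
    ((hasDerivAt_const x (1 : ℝ)).div (hasDerivAt_id' x) hx)).congr_deriv ?_
  field_simp
  linear_combination (-x ^ 2) * cosh_sq_sub_sinh_sq x

lemma hasDerivAt_self_div_sinh {x : ℝ} (hx : x ≠ 0) :
    HasDerivAt (fun x => x / sinh x) (-(langevin x * (x / sinh x))) x := by
  have hsinh : sinh x ≠ 0 := sinh_ne_zero.mpr hx
  refine ((hasDerivAt_id' x).div (hasDerivAt_sinh x) hsinh).congr_deriv ?_
  rw [langevin]
  field_simp
  ring

lemma tendsto_self_div_sinh_nhdsNE_zero : Tendsto (fun x => x / sinh x) (𝓝[≠] 0) (𝓝 1) := by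
  have h := (hasDerivAt_iff_tendsto_slope.mp (hasDerivAt_sinh 0)).inv₀ (cosh_pos 0).ne'
  rw [cosh_zero, inv_one] at h
  refine h.congr fun x => ?_
  simp [slope_def_field]

lemma tendsto_self_div_sinh_atTop : Tendsto (fun x => x / sinh x) atTop (𝓝 0) := by
  have hexp : Tendsto (fun x => exp x / x ^ 1 / 2) atTop atTop :=
    (tendsto_exp_div_pow_atTop 1).atTop_div_const two_pos
  have hsinh : Tendsto (fun x => sinh x / x) atTop atTop := by
    refine (hexp.atTop_add ((tendsto_exp_neg_atTop_nhds_zero.div_atTop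
      (tendsto_id.const_mul_atTop two_pos)).neg)).congr' ?_
    filter_upwards [eventually_gt_atTop 0] with x hx
    rw [sinh_eq, id_eq]
    field_simp
    ring
  simpa only [Pi.inv_def, inv_div] using hsinh.inv_tendsto_atTop

lemma tendsto_const_mul_nhdsGT_zero {s : ℝ} (hs : 0 < s) :
    Tendsto (fun x => s * x) (𝓝[>] 0) (𝓝[>] 0) :=
  tendsto_comap.mono_left (comap_mulLeft_nhdsGT_zero hs).ge

lemma hasDerivAt_langevin_comp_mul {s r : ℝ} (hsr : s * r ≠ 0) :
    HasDerivAt (fun r => langevin (s * r)) ((1 - (s * r / sinh (s * r)) ^ 2) / (s * r ^ 2)) r := by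
  have hs : s ≠ 0 := left_ne_zero_of_mul hsr
  refine ((hasDerivAt_langevin hsr).comp r ((hasDerivAt_id r).const_mul s)).congr_deriv ?_
  field_simp

lemma hasDerivAt_self_div_sinh_comp_mul {s r : ℝ} (hsr : s * r ≠ 0) :
    HasDerivAt (fun r => s * r / sinh (s * r))
      (-(s * langevin (s * r) * (s * r / sinh (s * r)))) r := by
  refine ((hasDerivAt_self_div_sinh hsr).comp r ((hasDerivAt_id r).const_mul s)).congr_deriv ?_
  ring

lemma integral_Ioi_of_hasDerivAt_of_nonneg_of_tendsto_nhdsGT {g g' : ℝ → ℝ} {a l₀ l : ℝ}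
    (hderiv : ∀ x ∈ Ioi a, HasDerivAt g (g' x) x) (hg' : ∀ x ∈ Ioi a, 0 ≤ g' x)
    (h_left : Tendsto g (𝓝[>] a) (𝓝 l₀)) (h_top : Tendsto g atTop (𝓝 l)) :
    ∫ x in Ioi a, g' x = l - l₀ := by
  rw [← Ici_sdiff_left] at h_left
  have hderiv' : ∀ x ∈ Ioi a, HasDerivAt (Function.update g a l₀) (g' x) x := fun x hx =>
    (hderiv x hx).congr_of_eventuallyEq <| (eventually_ne_nhds (ne_of_gt hx)).mono
      fun y hy => Function.update_of_ne hy l₀ g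
  have h_top' : Tendsto (Function.update g a l₀) atTop (𝓝 l) :=
    h_top.congr' <| (eventually_ne_atTop a).mono fun x hx => (Function.update_of_ne hx l₀ g).symm
  simpa using integral_Ioi_of_hasDerivAt_of_nonneg
    (continuousWithinAt_update_same.mpr h_left) hderiv' hg' h_top'

section BPS

variable {α s r : ℝ} {u f u' f' : ℝ → ℝ}

lemma bpsIntegrand_eq_bogomolny (hα : s ^ 2 = α) (hr : r ≠ 0) :
    bpsIntegrand α u u' f f' r =
      2 * (u' r + s * f r * u r) ^ 2 + (s * r * f' r - (1 - u r ^ 2) / r) ^ 2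
        + 2 * s * (f' r * (1 - u r ^ 2) - 2 * f r * u r * u' r) := by
  rw [bpsIntegrand, ← hα]
  field_simp
  ring

lemma bpsIntegrand_nonneg (hα : 0 ≤ α) : 0 ≤ bpsIntegrand α u u' f f' r := by
  unfold bpsIntegrand
  positivity

lemma hasDerivAt_bps_boundary_term (hα : s ^ 2 = α) (hr : r ≠ 0)
    (hu : HasDerivAt u (u' r) r) (hf : HasDerivAt f (f' r) r)
    (hbps : u' r + s * f r * u r = 0 ∧ s * r * f' r = (1 - u r ^ 2) / r) :
    HasDerivAt (fun x => 2 * s * (f x * (1 - u x ^ 2))) (bpsIntegrand α u u' f f' r) r := by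
  refine ((hf.mul ((hu.pow 2).const_sub 1)).const_mul (2 * s)).congr_deriv ?_
  rw [bpsIntegrand_eq_bogomolny hα hr, hbps.1, hbps.2, Pi.pow_apply]
  ring

lemma integral_bpsIntegrand_of_bps {a b : ℝ} (hα : s ^ 2 = α)
    (hu : ∀ r ∈ Ioi 0, HasDerivAt u (u' r) r) (hf : ∀ r ∈ Ioi 0, HasDerivAt f (f' r) r)
    (hbps : ∀ r ∈ Ioi 0, u' r + s * f r * u r = 0 ∧ s * r * f' r = (1 - u r ^ 2) / r)
    (h_zero : Tendsto (fun r => f r * (1 - u r ^ 2)) (𝓝[>] 0) (𝓝 a))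
    (h_top : Tendsto (fun r => f r * (1 - u r ^ 2)) atTop (𝓝 b)) :
    ∫ r in Ioi 0, bpsIntegrand α u u' f f' r = 2 * s * (b - a) := by
  rw [mul_sub]
  exact integral_Ioi_of_hasDerivAt_of_nonneg_of_tendsto_nhdsGT
    (fun r hr => hasDerivAt_bps_boundary_term hα (ne_of_gt hr) (hu r hr) (hf r hr) (hbps r hr))
    (fun _ _ => bpsIntegrand_nonneg (hα ▸ sq_nonneg s))
    (h_zero.const_mul _) (h_top.const_mul _)

lemma hasDerivAt_u'_of_bps (hα : s ^ 2 = α) (hr : r ≠ 0)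
    (hu : HasDerivAt u (u' r) r) (hf : HasDerivAt f (f' r) r)
    (hu' : ∀ x, u' x = -(s * f x * u x)) (hf' : s * r * f' r = (1 - u r ^ 2) / r) :
    HasDerivAt u' (α * f r ^ 2 * u r + u r * (u r ^ 2 - 1) / r ^ 2) r := by
  rw [show u' = fun x => -(s * f x * u x) from funext hu']
  refine ((hf.const_mul s).mul hu).neg.congr_deriv ?_
  have hsf' : s * f' r = (1 - u r ^ 2) / r ^ 2 := by
    field_simp at hf' ⊢
    linear_combination hf'
  rw [hsf', hu' r, ← hα]
  field_simp
  ring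

lemma hasDerivAt_f'_of_bps (hs : s ≠ 0) (hr : r ≠ 0)
    (hu : HasDerivAt u (u' r) r) (hu' : u' r = -(s * f r * u r))
    (hf' : ∀ x, f' x = (1 - u x ^ 2) / (s * x ^ 2)) :
    HasDerivAt f' (-(2 / r) * f' r + 2 / r ^ 2 * f r * u r ^ 2) r := by
  rw [show f' = fun x => (1 - u x ^ 2) / (s * x ^ 2) from funext hf']
  refine (((hu.pow 2).const_sub 1).div ((hasDerivAt_pow 2 r).const_mul s)
    (by positivity)).congr_deriv ?_
  rw [hu', Pi.pow_apply]
  field_simp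
  ring

end BPS

/-- the Prasad--Sommerfield pair `u(r) = √α r/sinh(√α r)`,
`f(r) = coth(√α r) − 1/(√α r)` solves the first-order BPS equations, hence the
second-order equations, satisfies the boundary conditions, and has energy `2√α`. -/
theorem prasad_sommerfield_solution (α : ℝ) (hα : 0 < α) (u f u' f' : ℝ → ℝ)
    (hu : ∀ r : ℝ, u r = Real.sqrt α * r / Real.sinh (Real.sqrt α * r))
    (hf : ∀ r : ℝ, f r = Real.cosh (Real.sqrt α * r) / Real.sinh (Real.sqrt α * r)
        - 1 / (Real.sqrt α * r))
    (hu' : ∀ r : ℝ, u' r = -(Real.sqrt α * f r * u r))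
    (hf' : ∀ r : ℝ, f' r = (1 - u r ^ 2) / (Real.sqrt α * r ^ 2)) :
    (∀ r : ℝ, 0 < r →
      HasDerivAt u (u' r) r ∧ HasDerivAt f (f' r) r ∧
      u' r + Real.sqrt α * f r * u r = 0 ∧
      Real.sqrt α * r * f' r = (1 - u r ^ 2) / r ∧
      HasDerivAt u' (α * f r ^ 2 * u r + u r * (u r ^ 2 - 1) / r ^ 2) r ∧
      HasDerivAt f' (-(2 / r) * f' r + 2 / r ^ 2 * f r * u r ^ 2) r) ∧
    Tendsto u (𝓝[>] (0 : ℝ)) (𝓝 1) ∧ Tendsto f (𝓝[>] (0 : ℝ)) (𝓝 0) ∧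
    Tendsto u atTop (𝓝 0) ∧ Tendsto f atTop (𝓝 1) ∧
    (∫ r in Ioi (0 : ℝ), bpsIntegrand α u u' f f' r) = 2 * Real.sqrt α := by
  have hs : 0 < √α := Real.sqrt_pos.mpr hα
  have hsα : √α ^ 2 = α := Real.sq_sqrt hα.le
  have hu_eq : u = fun r => √α * r / sinh (√α * r) := funext hu
  have hf_eq : f = fun r => langevin (√α * r) := funext hf
  have hdu : ∀ r ∈ Ioi 0, HasDerivAt u (u' r) r := fun r hr => by
    rw [hu_eq, hu', hf r, hu r]
    exact hasDerivAt_self_div_sinh_comp_mul (mul_pos hs hr).ne'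
  have hdf : ∀ r ∈ Ioi 0, HasDerivAt f (f' r) r := fun r hr => by
    rw [hf_eq, hf', hu r]
    exact hasDerivAt_langevin_comp_mul (mul_pos hs hr).ne'
  have hbps : ∀ r ∈ Ioi 0,
      u' r + √α * f r * u r = 0 ∧ √α * r * f' r = (1 - u r ^ 2) / r := fun r hr =>
    ⟨by rw [hu' r]; ring, by rw [hf' r]; field_simp [hs.ne', (mem_Ioi.mp hr).ne']⟩
  have hu0 : Tendsto u (𝓝[>] 0) (𝓝 1) := hu_eq ▸
    tendsto_self_div_sinh_nhdsNE_zero.comp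
      ((tendsto_const_mul_nhdsGT_zero hs).mono_right (nhdsGT_le_nhdsNE 0))
  have hf0 : Tendsto f (𝓝[>] 0) (𝓝 0) :=
    hf_eq ▸ tendsto_langevin_nhdsGT_zero.comp (tendsto_const_mul_nhdsGT_zero hs)
  have hutop : Tendsto u atTop (𝓝 0) :=
    hu_eq ▸ tendsto_self_div_sinh_atTop.comp (tendsto_id.const_mul_atTop hs)
  have hftop : Tendsto f atTop (𝓝 1) :=
    hf_eq ▸ tendsto_langevin_atTop.comp (tendsto_id.const_mul_atTop hs)
  refine ⟨fun r hr => ⟨hdu r hr, hdf r hr, (hbps r hr).1, (hbps r hr).2,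
    hasDerivAt_u'_of_bps hsα hr.ne' (hdu r hr) (hdf r hr) hu' (hbps r hr).2,
    hasDerivAt_f'_of_bps hs.ne' hr.ne' (hdu r hr) (hu' r) hf'⟩, hu0, hf0, hutop, hftop, ?_⟩
  simpa using integral_bpsIntegrand_of_bps hsα hdu hdf hbps
    (hf0.mul ((hu0.pow 2).const_sub 1)) (hftop.mul ((hutop.pow 2).const_sub 1))
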